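/- There exists a BD△ case model and formulas φ, χ such that the argument ⟨φ,χ⟩ is both positively coherent and negatively coherent but not strongly coherent. -/

import Mathlib

inductive BDForm : Type
  | var : ℕ → BDForm
  | neg : BDForm → BDForm
  | and : BDForm → BDForm → BDForm
  | or : BDForm → BDForm → BDForm
  | delta : BDForm → BDForm
deriving DecidableEq

structure BDModel where
  W : Type
  vp : ℕ → W → Prop
  vm : ℕ → W → Prop

def BDModel.sat (M : BDModel) : Bool → BDForm → M.W → Prop
  | true, .var p, w => M.vp p w
  | false, .var p, w => M.vm p w
  | b, .neg φ, w => M.sat (!b) φ w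
  | true, .and φ ψ, w => M.sat true φ w ∧ M.sat true ψ w
  | false, .and φ ψ, w => M.sat false φ w ∨ M.sat false ψ w
  | true, .or φ ψ, w => M.sat true φ w ∨ M.sat true ψ w
  | false, .or φ ψ, w => M.sat false φ w ∧ M.sat false ψ w
  | true, .delta φ, w => M.sat true φ w
  | false, .delta φ, w => ¬ M.sat true φ w

/-- BD△ entailment: positive extension inclusion and reverse negative inclusion, in every model. -/
def Entails (φ χ : BDForm) : Prop :=
  ∀ (M : BDModel) (w : M.W),
    (M.sat true φ w → M.sat true χ w) ∧ (M.sat false χ w → M.sat false φ w)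

/-- the value-detecting formulas -/
def tF (φ : BDForm) : BDForm := (φ.delta).and ((φ.neg.delta).neg)
def bF (φ : BDForm) : BDForm := (φ.delta).and (φ.neg.delta)
def nF (φ : BDForm) : BDForm := ((φ.delta).neg).and ((φ.neg.delta).neg)
def fF (φ : BDForm) : BDForm := ((φ.delta).neg).and (φ.neg.delta)

def topF : BDForm := ((BDForm.var 0).delta).or (((BDForm.var 0).delta).neg)
def botF : BDForm := topF.neg
/-- A BD△ case model: a finite set of pairwise incompatible non-trivial formulas
with a total preorder on it. -/
structure CaseModel where
  C : Finset BDForm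
  pre : BDForm → BDForm → Prop
  refl : ∀ ψ ∈ C, pre ψ ψ
  trans : ∀ ψ ∈ C, ∀ χ ∈ C, ∀ τ ∈ C, pre ψ χ → pre χ τ → pre ψ τ
  total : ∀ ψ ∈ C, ∀ χ ∈ C, pre ψ χ ∨ pre χ ψ
  nontriv : ∀ ψ ∈ C, ¬ Entails ψ botF
  incomp : ∀ ψ ∈ C, ∀ χ ∈ C, ψ ≠ χ → Entails (ψ.and χ) botF

def posCoherent (𝒞 : CaseModel) (φ χ : BDForm) : Prop :=
  ∃ ψ ∈ 𝒞.C, Entails ψ (φ.and χ.delta)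

def negCoherent (𝒞 : CaseModel) (φ χ : BDForm) : Prop :=
  ∃ ψ ∈ 𝒞.C, Entails ψ (φ.and χ.neg.delta.neg)

def strCoherent (𝒞 : CaseModel) (φ χ : BDForm) : Prop :=
  ∃ ψ ∈ 𝒞.C, Entails ψ (φ.and (tF χ))

def posPresValid (𝒞 : CaseModel) (φ χ : BDForm) : Prop :=
  ∃ ψ ∈ 𝒞.C, Entails ψ (φ.and χ.delta) ∧
    ∀ ψ' ∈ 𝒞.C, Entails ψ' φ → 𝒞.pre ψ' ψ

def negPresValid (𝒞 : CaseModel) (φ χ : BDForm) : Prop :=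
  ∃ ψ ∈ 𝒞.C, Entails ψ (φ.and χ.neg.delta.neg) ∧
    ∀ ψ' ∈ 𝒞.C, Entails ψ' φ → 𝒞.pre ψ' ψ

def strPresValid (𝒞 : CaseModel) (φ χ : BDForm) : Prop :=
  ∃ ψ ∈ 𝒞.C, Entails ψ (φ.and (tF χ)) ∧
    ∀ ψ' ∈ 𝒞.C, Entails ψ' φ → 𝒞.pre ψ' ψ

def posConclusive (𝒞 : CaseModel) (φ χ : BDForm) : Prop :=
  posCoherent 𝒞 φ χ ∧ ∀ ψ ∈ 𝒞.C, Entails ψ φ → Entails ψ (φ.and χ.delta)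

def negConclusive (𝒞 : CaseModel) (φ χ : BDForm) : Prop :=
  negCoherent 𝒞 φ χ ∧ ∀ ψ ∈ 𝒞.C, Entails ψ φ → Entails ψ (φ.and χ.neg.delta.neg)

def strConclusive (𝒞 : CaseModel) (φ χ : BDForm) : Prop :=
  strCoherent 𝒞 φ χ ∧ ∀ ψ ∈ 𝒞.C, Entails ψ φ → Entails ψ (φ.and (tF χ))

/-- Model where p0 has value B -/
def MB : BDModel := ⟨Unit, fun _ _ => True, fun _ _ => True⟩
/-- Model where p0 has value N -/
def MN : BDModel := ⟨Unit, fun _ _ => False, fun _ _ => False⟩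

def chi0 : BDForm := .var 0
def psi1 : BDForm := bF chi0
def psi2 : BDForm := nF chi0

lemma top_true (M : BDModel) (w : M.W) : M.sat true topF w := by
  simp [topF, BDModel.sat]; tauto

lemma top_nfalse (M : BDModel) (w : M.W) : ¬ M.sat false topF w := by
  simp [topF, BDModel.sat]

def myCM : CaseModel where
  C := {psi1, psi2}
  pre := fun _ _ => True
  refl := by intros; trivial
  trans := by intros; trivial
  total := by intros; left; trivial
  nontriv := by
    intro ψ hψ hE
    simp [Finset.mem_insert, Finset.mem_singleton] at hψ
    rcases hψ with h | h <;> subst h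
    · have := (hE MB ()).1
      simp [psi1, bF, chi0, BDModel.sat, MB, botF, topF] at this
    · have := (hE MN ()).1
      simp [psi2, nF, chi0, BDModel.sat, MN, botF, topF] at this
  incomp := by
    intro ψ hψ χ hχ hne
    simp [Finset.mem_insert, Finset.mem_singleton] at hψ hχ
    have key : ∀ (M : BDModel) (w : M.W),
        (M.sat true (psi1.and psi2) w → M.sat true botF w) ∧
        (M.sat false botF w → M.sat false (psi1.and psi2) w) := by
      intro M w
      constructor
      · intro h
        simp [psi1, psi2, bF, nF, chi0, BDModel.sat] at h
        exact absurd h.1.1 h.2.1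
      · intro _
        simp [psi1, psi2, bF, nF, chi0, BDModel.sat]
        tauto
    have key2 : ∀ (M : BDModel) (w : M.W),
        (M.sat true (psi2.and psi1) w → M.sat true botF w) ∧
        (M.sat false botF w → M.sat false (psi2.and psi1) w) := by
      intro M w
      constructor
      · intro h
        simp [psi1, psi2, bF, nF, chi0, BDModel.sat] at h
        exact absurd h.2.1 h.1.1
      · intro _
        simp [psi1, psi2, bF, nF, chi0, BDModel.sat]
        tauto
    rcases hψ with h1 | h1 <;> rcases hχ with h2 | h2 <;> subst h1 <;> subst h2
    · exact absurd rfl hne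
    · exact key
    · exact key2
    · exact absurd rfl hne

theorem stmt10 :
    ∃ (𝒞 : CaseModel) (φ χ : BDForm),
      posCoherent 𝒞 φ χ ∧ negCoherent 𝒞 φ χ ∧ ¬ strCoherent 𝒞 φ χ := by
  refine ⟨myCM, topF, chi0, ⟨psi1, ?_, ?_⟩, ⟨psi2, ?_, ?_⟩, ?_⟩
  · simp [myCM]
  · intro M w
    constructor
    · intro h
      simp only [psi1, bF, chi0, BDModel.sat] at h
      exact ⟨top_true M w, h.1⟩
    · intro h
      simp only [BDModel.sat] at h
      rcases h with h | h
      · exact absurd h (top_nfalse M w)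
      · simp [psi1, bF, chi0, BDModel.sat] at h ⊢; tauto
  · simp [myCM]
  · intro M w
    constructor
    · intro h
      simp only [psi2, nF, chi0, BDModel.sat] at h ⊢
      exact ⟨top_true M w, h.2⟩
    · intro h
      simp only [BDModel.sat] at h
      rcases h with h | h
      · exact absurd h (top_nfalse M w)
      · simp [psi2, nF, chi0, BDModel.sat] at h ⊢; tauto
  · rintro ⟨ψ, hψ, hE⟩
    simp [myCM, Finset.mem_insert, Finset.mem_singleton] at hψ
    rcases hψ with h | h <;> subst h
    · have := (hE MB ()).1
      simp [psi1, bF, tF, chi0, BDModel.sat, MB] at this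
    · have := (hE MN ()).1
      simp [psi2, nF, tF, chi0, BDModel.sat, MN] at this
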